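/- Let D be a finite-dimensional central division algebra over a field F that carries a valuation v_D extending a valuation v on F. Then [D̄ : F̄] · |Γ_D : Γ_F| ≤ [D : F] (the fundamental inequality), where D̄, F̄ are the residue (division) rings and Γ_D, Γ_F the value groups. -/

import Mathlib

/-!
Residual independence of the `x i` means that the value of `∑ cᵢ xᵢ` is the largest value
`v(cᵢ)` of a coefficient. Hence in a relation `∑ⱼ (∑ᵢ cᵢⱼ xᵢ) yⱼ = 0` the `j`-th term has
value in `v(F) · v(yⱼ)`; as these cosets are distinct, the nonzero terms have distinct values,
and an ultrametric sum of terms with distinct values is as large as its largest term. So all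
`cᵢⱼ` vanish: the `n·m` products `xᵢ yⱼ` are linearly independent over `F`.
-/

def valueGroup {D Γ₀ : Type} [DivisionRing D] [LinearOrderedCommGroupWithZero Γ₀]
    (vD : Valuation D Γ₀) : Subgroup Γ₀ˣ :=
  (Units.map vD.toMonoidWithZeroHom.toMonoidHom).range

open Finset

namespace Valuation

section Ring

variable {R Γ₀ : Type*} [Ring R] [LinearOrderedCommMonoidWithZero Γ₀] (v : Valuation R Γ₀)
  {ι : Type*}

theorem exists_map_eq_sup (s : Finset ι) (f : ι → R) : ∃ a, v a = s.sup (fun i => v (f i)) := by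
  refine s.sup_mem (Set.range v) ⟨0, by simp [bot_eq_zero]⟩ ?_ (fun i => v (f i))
    fun i _ => ⟨f i, rfl⟩
  rintro _ ⟨a, rfl⟩ _ ⟨b, rfl⟩
  rcases max_choice (v a) (v b) with h | h
  exacts [⟨a, h.symm⟩, ⟨b, h.symm⟩]

theorem map_sum_eq_sup_of_injOn (s : Finset ι) (f : ι → R)
    (hf : Set.InjOn (fun i => v (f i)) {i | i ∈ s ∧ v (f i) ≠ 0}) :
    v (∑ i ∈ s, f i) = s.sup (fun i => v (f i)) := by
  classical
  rcases s.eq_empty_or_nonempty with rfl | hs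
  · simp [bot_eq_zero]
  obtain ⟨j, hj, hjmax⟩ := s.exists_mem_eq_sup hs (fun i => v (f i))
  rcases eq_or_ne (v (f j)) 0 with h0 | h0
  · rw [hjmax, h0, ← le_zero_iff]
    exact v.map_sum_le fun i hi => h0 ▸ (le_sup (f := fun i => v (f i)) hi).trans_eq hjmax
  rw [hjmax]
  refine v.map_sum_eq_of_lt hj fun i hi => ?_
  obtain ⟨his, hij⟩ := Finset.mem_sdiff.1 hi
  refine lt_of_le_of_ne ((le_sup (f := fun i => v (f i)) his).trans_eq hjmax) fun heq => ?_
  exact Finset.notMem_singleton.1 hij <| hf ⟨his, heq ▸ h0⟩ ⟨hj, h0⟩ heq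

end Ring

section Algebra

variable {F D Γ₀ ι : Type*} [Field F] [Ring D] [Algebra F D] [LinearOrderedCommGroupWithZero Γ₀]
  (vD : Valuation D Γ₀) [Fintype ι] {x : ι → D}

theorem map_sum_algebraMap_mul_eq_sup (hx : ∀ i, vD (x i) ≤ 1)
    (hxind : ∀ c : ι → F, (∀ i, vD (algebraMap F D (c i)) ≤ 1) →
      vD (∑ i, algebraMap F D (c i) * x i) < 1 → ∀ i, vD (algebraMap F D (c i)) < 1)
    (c : ι → F) :
    vD (∑ i, algebraMap F D (c i) * x i) = univ.sup fun i => vD (algebraMap F D (c i)) := by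
  set vF := vD.comap (algebraMap F D)
  change _ = univ.sup fun i => vF (c i)
  refine le_antisymm (vD.map_sum_le fun i _ => ?_) ?_
  · rw [map_mul]
    exact (mul_le_of_le_one_right' (hx i)).trans (le_sup (f := fun i => vF (c i)) (mem_univ i))
  rcases (univ : Finset ι).eq_empty_or_nonempty with h | hne
  · simp [h, bot_eq_zero]
  obtain ⟨k, -, hk⟩ := univ.exists_mem_eq_sup hne (fun i => vF (c i))
  rw [hk]
  rcases eq_or_ne (c k) 0 with h0 | h0
  · simp [h0]
  -- dividing by a dominant coefficient brings us into the situation of `hxind`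
  set d := fun i => (c k)⁻¹ * c i
  have hd : ∀ i, vF (d i) ≤ 1 := fun i => by
    rw [map_mul, map_inv₀, inv_mul_le_one₀ (vF.pos_iff.2 h0)]
    exact (le_sup (f := fun i => vF (c i)) (mem_univ i)).trans_eq hk
  have hdk : vF (d k) = 1 := by simp [d, h0]
  have hsum : 1 ≤ vD (∑ i, algebraMap F D (d i) * x i) :=
    not_lt.1 fun hlt => (hxind d hd hlt k).ne hdk
  have hfactor : ∑ i, algebraMap F D (c i) * x i =
      algebraMap F D (c k) * ∑ i, algebraMap F D (d i) * x i := by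
    simp only [d, mul_sum, ← mul_assoc, ← map_mul, mul_inv_cancel₀ h0, one_mul]
  rw [hfactor, map_mul]
  exact le_mul_of_one_le_right' hsum

theorem linearIndependent_mul {κ : Type*} [Fintype κ] {y : κ → D}
    (hx : ∀ i, vD (x i) ≤ 1)
    (hxind : ∀ c : ι → F, (∀ i, vD (algebraMap F D (c i)) ≤ 1) →
      vD (∑ i, algebraMap F D (c i) * x i) < 1 → ∀ i, vD (algebraMap F D (c i)) < 1)
    (hy : ∀ j, vD (y j) ≠ 0)
    (hydist : ∀ j j', j ≠ j' → ∀ c : F, c ≠ 0 →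
      vD (y j) ≠ vD (algebraMap F D c) * vD (y j')) :
    LinearIndependent F fun p : ι × κ => x p.1 * y p.2 := by
  classical
  set vF := vD.comap (algebraMap F D)
  rw [Fintype.linearIndependent_iff]
  intro g hg
  set S : κ → D := fun j => ∑ i, algebraMap F D (g (i, j)) * x i
  have hS : ∀ j, vD (S j * y j) = univ.sup (fun i => vF (g (i, j))) * vD (y j) := fun j => by
    rw [map_mul, vD.map_sum_algebraMap_mul_eq_sup hx hxind]
    rfl
  have hsum : ∑ j, S j * y j = 0 := by
    rw [← hg, Fintype.sum_prod_type_right]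
    simp [S, sum_mul, Algebra.smul_def, mul_assoc]
  have hinj : Set.InjOn (fun j => vD (S j * y j)) {j | j ∈ univ ∧ vD (S j * y j) ≠ 0} := by
    rintro j ⟨-, hj⟩ j' - heq
    by_contra hne
    obtain ⟨a, ha⟩ := vF.exists_map_eq_sup univ fun i => g (i, j)
    obtain ⟨b, hb⟩ := vF.exists_map_eq_sup univ fun i => g (i, j')
    simp only [hS, ← ha, ← hb] at heq hj
    have ha0 : vF a ≠ 0 := left_ne_zero_of_mul hj
    have hb0 : vF b ≠ 0 := left_ne_zero_of_mul (heq ▸ hj)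
    refine hydist j j' hne (b / a) (div_ne_zero (vF.ne_zero_iff.1 hb0) (vF.ne_zero_iff.1 ha0)) ?_
    change _ = vF (b / a) * _
    rw [map_div₀, div_mul_eq_mul_div, eq_div_iff ha0, mul_comm, heq]
  have hzero := vD.map_sum_eq_sup_of_injOn univ _ hinj
  rw [hsum, map_zero, eq_comm, ← bot_eq_zero, Finset.sup_eq_bot_iff] at hzero
  rintro ⟨i, j⟩
  have hj := hzero j (mem_univ j)
  rw [hS, bot_eq_zero, mul_eq_zero, or_iff_left (hy j), ← bot_eq_zero,
    Finset.sup_eq_bot_iff] at hj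
  exact vF.zero_iff.1 ((hj i (mem_univ i)).trans bot_eq_zero)

end Algebra

end Valuation

/-- fundamental inequality `[D̄ : F̄]·|Γ_D : Γ_F| ≤ [D : F]`, phrased
elementwise. Let `D` be a finite-dimensional central division algebra over `F` with a
valuation `v_D` extending the valuation `v = v_D ∘ algebraMap` of `F`. If `x₁,…,x_n` are
valuation integers of `D` whose residues are linearly independent over the residue field of
`F`, and `y₁,…,y_m ∈ D^*` have values in pairwise distinct cosets of `Γ_F` in `Γ_D`, then
`n·m ≤ [D : F]`; equivalently `[D̄ : F̄]·|Γ_D : Γ_F| ≤ [D : F]`. -/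
theorem fundamental_inequality (F D Γ₀ : Type) [Field F] [DivisionRing D] [Algebra F D]
    [FiniteDimensional F D] [LinearOrderedCommGroupWithZero Γ₀]
    (vD : Valuation D Γ₀)
    (n m : ℕ) (x : Fin n → D) (y : Fin m → D)
    (hx : ∀ i, vD (x i) ≤ 1)
    (hxind : ∀ c : Fin n → F, (∀ i, vD (algebraMap F D (c i)) ≤ 1) →
      vD (∑ i, algebraMap F D (c i) * x i) < 1 → ∀ i, vD (algebraMap F D (c i)) < 1)
    (hy : ∀ i, y i ≠ 0)
    (hydist : ∀ i j, i ≠ j → ∀ c : F, c ≠ 0 →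
      vD (y i) ≠ vD (algebraMap F D c) * vD (y j)) :
    n * m ≤ Module.finrank F D := by
  have hli := vD.linearIndependent_mul hx hxind (fun j => vD.ne_zero_iff.2 (hy j)) hydist
  simpa [Fintype.card_prod] using hli.fintype_card_le_finrank
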